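/- Let H be a hypergroup with a central series 1 = T₀ ⊆ T₁ ⊆ ⋯ ⊆ Tₙ = H (meaning each Tᵢ is closed and Tᵢ//Tᵢ₋₁ ⊆ Z(H//Tᵢ₋₁) for 1 ≤ i ≤ n). Then Tᵢ ⊆ Zᵢ(H) for each 0 ≤ i ≤ n, where Zᵢ(H) is the i-th term of the upper central series. In particular, a hypergroup possessing a central series is weakly nilpotent. -/

import Mathlib

/-- A hypergroup: a set with a hypermultiplication, identity and involution
satisfying (H1), (H2), (H3). -/
structure Hypergroup (H : Type*) where
  hmul : H → H → Set H
  one : H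
  star : H → H
  assoc : ∀ p q r : H, (⋃ x ∈ hmul q r, hmul p x) = ⋃ x ∈ hmul p q, hmul x r
  hmul_one : ∀ s : H, hmul s one = {s}
  inv_left : ∀ p q r : H, r ∈ hmul p q → q ∈ hmul (star p) r
  inv_right : ∀ p q r : H, r ∈ hmul p q → p ∈ hmul r (star q)

namespace Hypergroup

variable {H : Type*} (G : Hypergroup H)

/-- Complex (set) product: `AB = ⋃_{a ∈ A, b ∈ B} ab`. -/
def smul (A B : Set H) : Set H := ⋃ a ∈ A, ⋃ b ∈ B, G.hmul a b

/-- `A* = { a* | a ∈ A }`. -/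
def sstar (A : Set H) : Set H := G.star '' A

/-- A nonempty subset `F` is closed if `F*F ⊆ F`. -/
def IsClosed (F : Set H) : Prop := F.Nonempty ∧ G.smul (G.sstar F) F ⊆ F

/-- `F` is normal in `K`: `Fk ⊆ kF` for all `k ∈ K`. -/
def IsNormalIn (F K : Set H) : Prop := ∀ k ∈ K, G.smul F {k} ⊆ G.smul {k} F

/-- `F` is strongly normal in `K`: `k*Fk ⊆ F` for all `k ∈ K`. -/
def IsStronglyNormalIn (F K : Set H) : Prop :=
  ∀ k ∈ K, G.smul (G.smul {G.star k} F) {k} ⊆ F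

/-- An element `s` is thin if `s*s = {1}`. -/
def IsThinElem (s : H) : Prop := G.hmul (G.star s) s = {G.one}

/-- A hypergroup is thin if all elements are thin. -/
def IsThin : Prop := ∀ s : H, G.IsThinElem s

/-- The center `Z(H) = {h | hx = xh for all x, h*h = {1}}`. -/
def center : Set H :=
  {h | (∀ x : H, G.hmul h x = G.hmul x h) ∧ G.hmul (G.star h) h = {G.one}}

/-- The class `h^F := FhF`. -/
def cls (F : Set H) (h : H) : Set H := G.smul (G.smul F {h}) F

/-- The quotient set `H//F := { h^F | h ∈ H }`. -/
def quotSet (F : Set H) : Set (Set H) := Set.range (G.cls F)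

/-- The class `h^F` as an element of `H//F`. -/
def qcls (F : Set H) (h : H) : G.quotSet F := ⟨G.cls F h, h, rfl⟩

/-- The full preimage in `H` of the center of the quotient `H//T`:
`{h | h^T ∈ Z(H//T)}`, i.e. `h^T` commutes with all classes `y^T` and
`(h^T)*(h^T) = {1^T} = {T}`. -/
def qCenterPre (T : Set H) : Set H :=
  {h | (∀ y : H, G.cls T '' (G.smul (G.smul {h} T) {y}) =
          G.cls T '' (G.smul (G.smul {y} T) {h})) ∧
       G.cls T '' (G.smul (G.smul {G.star h} T) {h}) = {T}}

/-- The upper central series: `Z₀(H) = {1}`, and `Zᵢ₊₁(H)` is the full preimage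
of `Z(H//Zᵢ(H))`, i.e. `Zᵢ₊₁(H)//Zᵢ(H) = Z(H//Zᵢ(H))`. -/
def upperCentral : ℕ → Set H
  | 0 => {G.one}
  | n + 1 => G.qCenterPre (upperCentral n)

/-- A hypergroup is weakly nilpotent if `Zₙ(H) = H` for some `n`. -/
def WeaklyNilpotent : Prop := ∃ n : ℕ, G.upperCentral n = Set.univ

/-- `F` is subnormal in `K` via a chain of successively normal closed subsets. -/
def IsSubnormalIn (F K : Set H) : Prop :=
  ∃ n : ℕ, ∃ C : ℕ → Set H, C 0 = F ∧ C n = K ∧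
    ∀ i < n, C i ⊆ C (i + 1) ∧ G.IsClosed (C (i + 1)) ∧ G.IsNormalIn (C i) (C (i + 1))

/-- The quotient `K//N` is thin: `(k^N)*(k^N) = {1^N}` for all `k ∈ K`. -/
def QuotThin (N K : Set H) : Prop :=
  ∀ k ∈ K, G.cls N '' (G.smul (G.smul {G.star k} N) {k}) = {N}

/-- A residually-thin chain from `{1}` to `K`. -/
def RTChainOn (K : Set H) (n : ℕ) (C : ℕ → Set H) : Prop :=
  C 0 = {G.one} ∧ C n = K ∧
    ∀ i < n, C i ⊆ C (i + 1) ∧ G.IsClosed (C (i + 1)) ∧ G.QuotThin (C i) (C (i + 1))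

/-- The valency `n_K = ∏ |Cᵢ₊₁//Cᵢ|` computed along some RT chain for `K`. -/
def HasValencyOn (K : Set H) (m : ℕ) : Prop :=
  ∃ n C, G.RTChainOn K n C ∧
    m = ∏ i ∈ Finset.range n, Nat.card (G.cls (C i) '' C (i + 1))

/-- A closed `p`-subset: a closed subset whose valency is a power of `p`. -/
def PSubsetOn (p : ℕ) (K : Set H) : Prop :=
  G.IsClosed K ∧ ∃ m k : ℕ, G.HasValencyOn K m ∧ m = p ^ k

/-- `h` is `p`-valenced in `K`: for every subnormal closed `p`-subset `U` of `K`
such that `(h*)^U h^U` consists of thin elements of the quotient,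
`n_{(h*)^U h^U} = |(h*)^U h^U|` is a power of `p`. -/
def PValencedElemOn (p : ℕ) (K : Set H) (h : H) : Prop :=
  ∀ U : Set H, G.IsClosed U → U ⊆ K → G.IsSubnormalIn U K → G.PSubsetOn p U →
    (∀ x ∈ G.smul (G.smul {G.star h} U) {h},
      G.cls U '' (G.smul (G.smul {G.star x} U) {x}) = {U}) →
    ∃ k : ℕ, Nat.card (G.cls U '' (G.smul (G.smul {G.star h} U) {h})) = p ^ k

/-- `K` is `p`-valenced if all its elements are. -/
def PValencedOn (p : ℕ) (K : Set H) : Prop := ∀ h ∈ K, G.PValencedElemOn p K h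

end Hypergroup

/-!
For a closed subset `S` with `Sk ⊆ kS` for every `k`, the sets `cS` partition `H`, and `h^S` is
central and thin in `H//S` exactly when every element of `hy` lies in the class `dS` of some
`d ∈ yh` and vice versa, and `h*h ⊆ S`. A relation of this kind modulo `T ⊆ S` (with
`1 ∈ T`) remains true modulo `S`, so the preimage of `Z(H//T)` lies in that of `Z(H//S)`. That
preimage is again closed with `Sk ⊆ kS`, hence every `Zᵢ(H)` is, and induction gives
`Tᵢ₊₁ ⊆ pre Z(H//Tᵢ) ⊆ pre Z(H//Zᵢ(H)) = Zᵢ₊₁(H)`.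
-/

namespace Hypergroup

variable {H : Type*} (G : Hypergroup H)

theorem mem_hmul_one (s : H) : s ∈ G.hmul s G.one := by
  rw [G.hmul_one]
  rfl

theorem one_mem_star_hmul (s : H) : G.one ∈ G.hmul (G.star s) s :=
  G.inv_left s G.one s (G.mem_hmul_one s)

theorem star_star (s : H) : G.star (G.star s) = s := by
  have h := G.inv_left (G.star s) s G.one (G.one_mem_star_hmul s)
  rw [G.hmul_one] at h
  exact h.symm

theorem one_mem_hmul_star (s : H) : G.one ∈ G.hmul s (G.star s) := by
  simpa only [star_star] using G.one_mem_star_hmul (G.star s)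

theorem star_one : G.star G.one = G.one := by
  have h := G.inv_left G.one G.one G.one (G.mem_hmul_one G.one)
  rw [G.hmul_one] at h
  exact h.symm

theorem one_hmul (k : H) : G.hmul G.one k = {k} := by
  ext x
  constructor
  · intro hx
    have h := G.inv_left x (G.star k) G.one (G.inv_right G.one k x hx)
    rw [G.hmul_one, Set.mem_singleton_iff] at h
    simpa only [star_star, Set.mem_singleton_iff] using congrArg G.star h.symm
  · rintro rfl
    simpa only [star_star] using G.inv_right x (G.star x) G.one (G.one_mem_hmul_star x)

theorem mem_one_hmul (k : H) : k ∈ G.hmul G.one k := by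
  rw [G.one_hmul]
  rfl

theorem star_mem_hmul {p q x : H} (hx : x ∈ G.hmul p q) :
    G.star x ∈ G.hmul (G.star q) (G.star p) :=
  G.inv_left q (G.star x) (G.star p) (G.inv_right (G.star p) x q (G.inv_left p q x hx))

theorem exists_hmul_assoc_left {p q r x c : H} (hx : x ∈ G.hmul q r) (hc : c ∈ G.hmul p x) :
    ∃ w ∈ G.hmul p q, c ∈ G.hmul w r := by
  have h : c ∈ ⋃ y ∈ G.hmul q r, G.hmul p y := Set.mem_biUnion hx hc
  rw [G.assoc] at h
  simpa only [Set.mem_iUnion, exists_prop] using h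

theorem exists_hmul_assoc_right {p q r w c : H} (hw : w ∈ G.hmul p q) (hc : c ∈ G.hmul w r) :
    ∃ x ∈ G.hmul q r, c ∈ G.hmul p x := by
  have h : c ∈ ⋃ y ∈ G.hmul p q, G.hmul y r := Set.mem_biUnion hw hc
  rw [← G.assoc] at h
  simpa only [Set.mem_iUnion, exists_prop] using h

theorem hmul_nonempty (p q : H) : (G.hmul p q).Nonempty := by
  obtain ⟨w, hw, -⟩ := G.exists_hmul_assoc_left (G.one_mem_hmul_star q) (G.mem_hmul_one p)
  exact ⟨w, hw⟩

variable {G}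

theorem smul_mono {A A' B B' : Set H} (hA : A ⊆ A') (hB : B ⊆ B') :
    G.smul A B ⊆ G.smul A' B' :=
  Set.biUnion_mono hA fun _ _ => Set.biUnion_mono hB fun _ _ => subset_rfl

theorem IsClosed.one_mem {F : Set H} (hF : G.IsClosed F) : G.one ∈ F := by
  obtain ⟨⟨a, ha⟩, hsub⟩ := hF
  apply hsub
  simp only [smul, sstar, Set.mem_iUnion, exists_prop, Set.mem_image]
  exact ⟨G.star a, ⟨a, ha, rfl⟩, a, ha, G.one_mem_star_hmul a⟩

variable (G)

def CosetRel (S : Set H) (c d : H) : Prop := ∃ s ∈ S, d ∈ G.hmul c s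

variable {G}

theorem CosetRel.exists_hmul_right {S : Set H} {a w w' c : H} (h : G.CosetRel S w' w)
    (hc : c ∈ G.hmul a w) : ∃ e ∈ G.hmul a w', G.CosetRel S e c := by
  obtain ⟨s, hs, hw⟩ := h
  obtain ⟨e, he, hce⟩ := G.exists_hmul_assoc_left hw hc
  exact ⟨e, he, s, hs, hce⟩

theorem mem_smul_smul_singleton_iff {T : Set H} {a b c : H} :
    c ∈ G.smul (G.smul {a} T) {b} ↔ ∃ w, G.CosetRel T a w ∧ c ∈ G.hmul w b := by
  simp only [smul, CosetRel, Set.mem_iUnion, Set.mem_singleton_iff, exists_prop,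
    exists_eq_left]

theorem mem_smul_smul_singleton_of_mem_hmul {T : Set H} (hT : G.one ∈ T) {a b c : H}
    (hc : c ∈ G.hmul a b) : c ∈ G.smul (G.smul {a} T) {b} :=
  mem_smul_smul_singleton_iff.2 ⟨a, ⟨G.one, hT, G.mem_hmul_one a⟩, hc⟩

theorem mem_cls_iff_exists {T : Set H} {c x : H} :
    x ∈ G.cls T c ↔ ∃ u, (∃ t ∈ T, u ∈ G.hmul t c) ∧ G.CosetRel T u x := by
  simp only [cls, smul, CosetRel, Set.mem_iUnion, Set.mem_singleton_iff, exists_prop,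
    exists_eq_left]

theorem mem_cls_self {T : Set H} (hT : G.one ∈ T) (c : H) : c ∈ G.cls T c :=
  mem_cls_iff_exists.2 ⟨c, ⟨G.one, hT, G.mem_one_hmul c⟩, G.one, hT, G.mem_hmul_one c⟩

theorem cls_mono {S T : Set H} (hTS : T ⊆ S) (c : H) : G.cls T c ⊆ G.cls S c :=
  smul_mono (smul_mono hTS subset_rfl) hTS

variable (G)

structure IsNormalClosed (S : Set H) : Prop where
  one_mem : G.one ∈ S
  star_mem {a : H} : a ∈ S → G.star a ∈ S
  hmul_subset {a b : H} : a ∈ S → b ∈ S → G.hmul a b ⊆ S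
  normal {s k x : H} : s ∈ S → x ∈ G.hmul s k → G.CosetRel S k x

variable {G}

namespace IsNormalClosed

variable {S : Set H}

theorem cosetRel_symm (hS : G.IsNormalClosed S) {c d : H} (h : G.CosetRel S c d) :
    G.CosetRel S d c :=
  let ⟨s, hs, hd⟩ := h
  ⟨G.star s, hS.star_mem hs, G.inv_right c s d hd⟩

theorem cosetRel_trans (hS : G.IsNormalClosed S) {c d e : H} (h₁ : G.CosetRel S c d)
    (h₂ : G.CosetRel S d e) : G.CosetRel S c e := by
  obtain ⟨s, hs, hd⟩ := h₁
  obtain ⟨t, ht, he⟩ := h₂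
  obtain ⟨x, hx, hex⟩ := G.exists_hmul_assoc_right hd he
  exact ⟨x, hS.hmul_subset hs ht hx, hex⟩

theorem cosetRel_star (hS : G.IsNormalClosed S) {c d : H} (h : G.CosetRel S c d) :
    G.CosetRel S (G.star c) (G.star d) :=
  let ⟨_, hs, hd⟩ := h
  hS.normal (hS.star_mem hs) (G.star_mem_hmul hd)

theorem mem_of_cosetRel (hS : G.IsNormalClosed S) {c d : H} (hc : c ∈ S)
    (h : G.CosetRel S c d) : d ∈ S :=
  let ⟨_, hs, hd⟩ := h
  hS.hmul_subset hc hs hd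

theorem exists_hmul_of_cosetRel_left (hS : G.IsNormalClosed S) {a b w c : H}
    (h : G.CosetRel S a w) (hc : c ∈ G.hmul w b) : ∃ e ∈ G.hmul a b, G.CosetRel S e c := by
  obtain ⟨s, hs, hw⟩ := h
  obtain ⟨x, hx, hcx⟩ := G.exists_hmul_assoc_right hw hc
  obtain ⟨t, ht, hxt⟩ := hS.normal hs hx
  obtain ⟨e, he, hce⟩ := G.exists_hmul_assoc_left hxt hcx
  exact ⟨e, he, t, ht, hce⟩

theorem exists_cosetRel_of_mem_smul_smul (hS : G.IsNormalClosed S) {a b c : H}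
    (hc : c ∈ G.smul (G.smul {a} S) {b}) : ∃ e ∈ G.hmul a b, G.CosetRel S e c := by
  obtain ⟨w, haw, hc⟩ := mem_smul_smul_singleton_iff.1 hc
  exact hS.exists_hmul_of_cosetRel_left haw hc

theorem cosetRel_of_mem_hmul (hS : G.IsNormalClosed S) {a y c d : H}
    (ha : G.hmul a (G.star a) ⊆ S) (hc : c ∈ G.hmul a y) (hd : d ∈ G.hmul a y) :
    G.CosetRel S c d := by
  obtain ⟨u, hu, hdu⟩ := G.exists_hmul_assoc_left (G.inv_left a y c hc) hd
  exact hS.normal (ha hu) hdu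

theorem star_hmul_subset_of_mem_hmul (hS : G.IsNormalClosed S)
    {u v x : H} (hu : G.hmul (G.star u) u ⊆ S) (hv : G.hmul (G.star v) v ⊆ S)
    (hx : x ∈ G.hmul u v) : G.hmul (G.star x) x ⊆ S := by
  intro c hc
  obtain ⟨z, hz, hcz⟩ := G.exists_hmul_assoc_left hx hc
  obtain ⟨p, hp, hzp⟩ := G.exists_hmul_assoc_right (G.star_mem_hmul hx) hz
  obtain ⟨e, he, hec⟩ := hS.exists_hmul_of_cosetRel_left ⟨p, hu hp, hzp⟩ hcz
  exact hS.mem_of_cosetRel (hv he) hec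

theorem mem_cls_iff (hS : G.IsNormalClosed S) {c x : H} : x ∈ G.cls S c ↔ G.CosetRel S c x := by
  rw [mem_cls_iff_exists]
  constructor
  · rintro ⟨u, ⟨t, ht, hu⟩, hux⟩
    exact hS.cosetRel_trans (hS.normal ht hu) hux
  · exact fun h => ⟨c, ⟨G.one, hS.one_mem, G.mem_one_hmul c⟩, h⟩

theorem cls_eq_of_cosetRel (hS : G.IsNormalClosed S) {c d : H} (h : G.CosetRel S c d) :
    G.cls S c = G.cls S d := by
  ext x
  simp only [hS.mem_cls_iff]
  exact ⟨hS.cosetRel_trans (hS.cosetRel_symm h), hS.cosetRel_trans h⟩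

theorem cls_eq_self (hS : G.IsNormalClosed S) {c : H} (hc : c ∈ S) : G.cls S c = S := by
  ext x
  rw [hS.mem_cls_iff]
  refine ⟨hS.mem_of_cosetRel hc, fun hx => ?_⟩
  obtain ⟨u, hu⟩ := G.hmul_nonempty x (G.star c)
  have hxu : x ∈ G.hmul u c := by simpa only [star_star] using G.inv_right x (G.star c) u hu
  exact hS.normal (hS.hmul_subset hx (hS.star_mem hc) hu) hxu

end IsNormalClosed

variable (G)

def CommutesMod (S : Set H) (a b : H) : Prop :=
  ∀ c ∈ G.hmul a b, ∃ d ∈ G.hmul b a, G.CosetRel S c d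

structure IsCentralMod (S : Set H) (h : H) : Prop where
  commutesMod_left (y : H) : G.CommutesMod S h y
  commutesMod_right (y : H) : G.CommutesMod S y h
  star_hmul_subset : G.hmul (G.star h) h ⊆ S

variable {G} {S : Set H}

theorem CommutesMod.star {a b : H} (h : G.CommutesMod S a b) (hS : G.IsNormalClosed S) :
    G.CommutesMod S (G.star b) (G.star a) := by
  intro c hc
  obtain ⟨d, hd, hcd⟩ := h (G.star c) (by simpa only [star_star] using G.star_mem_hmul hc)
  refine ⟨G.star d, by simpa only [star_star] using G.star_mem_hmul hd, ?_⟩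
  simpa only [star_star] using hS.cosetRel_star hcd

namespace IsCentralMod

theorem hmul_star_subset {h : H} (hh : G.IsCentralMod S h) (hS : G.IsNormalClosed S) :
    G.hmul h (G.star h) ⊆ S := by
  intro c hc
  obtain ⟨d, hd, hcd⟩ := hh.commutesMod_left _ c hc
  exact hS.mem_of_cosetRel (hh.star_hmul_subset hd) (hS.cosetRel_symm hcd)

theorem of_mem (hS : G.IsNormalClosed S) {s : H} (hs : s ∈ S) : G.IsCentralMod S s := by
  refine ⟨fun y c hc => ?_, fun y c hc => ?_, hS.hmul_subset (hS.star_mem hs) hs⟩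
  · obtain ⟨d, hd⟩ := G.hmul_nonempty y s
    exact ⟨d, hd, hS.cosetRel_trans (hS.cosetRel_symm (hS.normal hs hc)) ⟨s, hs, hd⟩⟩
  · obtain ⟨d, hd⟩ := G.hmul_nonempty s y
    exact ⟨d, hd, hS.cosetRel_trans (hS.cosetRel_symm ⟨s, hs, hc⟩) (hS.normal hs hd)⟩

theorem star {h : H} (hh : G.IsCentralMod S h) (hS : G.IsNormalClosed S) :
    G.IsCentralMod S (G.star h) := by
  refine ⟨fun y => ?_, fun y => ?_, ?_⟩
  · simpa only [star_star] using (hh.commutesMod_right (G.star y)).star hS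
  · simpa only [star_star] using (hh.commutesMod_left (G.star y)).star hS
  · simpa only [star_star] using hh.hmul_star_subset hS

theorem commutesMod_of_mem_hmul {u v x : H} (hu : G.IsCentralMod S u)
    (hv : ∀ y, G.CommutesMod S v y) (hS : G.IsNormalClosed S) (hx : x ∈ G.hmul u v) (y : H) :
    G.CommutesMod S x y := by
  intro c hc
  obtain ⟨w, hw, hcw⟩ := G.exists_hmul_assoc_right hx hc
  obtain ⟨c₁, hc₁, hwc₁⟩ := hv y w hw
  obtain ⟨e, he, hec⟩ := (hS.cosetRel_symm hwc₁).exists_hmul_right hcw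
  obtain ⟨d, hd, hed⟩ := hu.commutesMod_left c₁ e he
  obtain ⟨g, hg, hdg⟩ := G.exists_hmul_assoc_right hc₁ hd
  obtain ⟨x', hx', hgx'⟩ := hu.commutesMod_right v g hg
  have hx'x := hS.cosetRel_of_mem_hmul (hu.hmul_star_subset hS) hx' hx
  obtain ⟨f, hf, hfd⟩ := (hS.cosetRel_symm (hS.cosetRel_trans hgx' hx'x)).exists_hmul_right hdg
  have hcd := hS.cosetRel_trans (hS.cosetRel_symm hec) hed
  exact ⟨f, hf, hS.cosetRel_trans hcd (hS.cosetRel_symm hfd)⟩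

theorem of_mem_hmul {u v x : H} (hu : G.IsCentralMod S u) (hv : G.IsCentralMod S v)
    (hS : G.IsNormalClosed S) (hx : x ∈ G.hmul u v) : G.IsCentralMod S x := by
  refine ⟨hu.commutesMod_of_mem_hmul hv.commutesMod_left hS hx, fun y => ?_,
    hS.star_hmul_subset_of_mem_hmul hu.star_hmul_subset hv.star_hmul_subset hx⟩
  simpa only [star_star] using
    ((hv.star hS).commutesMod_of_mem_hmul (hu.star hS).commutesMod_left hS
      (G.star_mem_hmul hx) (G.star y)).star hS

end IsCentralMod

theorem commutesMod_of_image_cls_subset {T : Set H} (hT : G.one ∈ T) (hTS : T ⊆ S)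
    (hS : G.IsNormalClosed S) {a b : H}
    (h : G.cls T '' G.smul (G.smul {a} T) {b} ⊆ G.cls T '' G.smul (G.smul {b} T) {a}) :
    G.CommutesMod S a b := by
  intro c hc
  obtain ⟨d₀, hd₀, hcls⟩ := h ⟨c, mem_smul_smul_singleton_of_mem_hmul hT hc, rfl⟩
  have hd₀c : G.CosetRel S d₀ c :=
    hS.mem_cls_iff.1 (cls_mono hTS d₀ (hcls ▸ mem_cls_self hT c))
  obtain ⟨d, hd, hdd₀⟩ :=
    hS.exists_cosetRel_of_mem_smul_smul (smul_mono (smul_mono subset_rfl hTS) subset_rfl hd₀)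
  exact ⟨d, hd, hS.cosetRel_symm (hS.cosetRel_trans hdd₀ hd₀c)⟩

theorem hmul_subset_of_image_cls_subset {T : Set H} (hT : G.one ∈ T) {a b : H}
    (h : G.cls T '' G.smul (G.smul {a} T) {b} ⊆ {T}) : G.hmul a b ⊆ T := by
  intro c hc
  have hcls : G.cls T c = T := h ⟨c, mem_smul_smul_singleton_of_mem_hmul hT hc, rfl⟩
  exact hcls ▸ mem_cls_self hT c

theorem isCentralMod_of_mem_qCenterPre {T : Set H} (hT : G.one ∈ T) (hTS : T ⊆ S)
    (hS : G.IsNormalClosed S) {h : H} (hh : h ∈ G.qCenterPre T) : G.IsCentralMod S h :=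
  ⟨fun y => commutesMod_of_image_cls_subset hT hTS hS (hh.1 y).subset,
    fun y => commutesMod_of_image_cls_subset hT hTS hS (hh.1 y).symm.subset,
    (hmul_subset_of_image_cls_subset hT hh.2.subset).trans hTS⟩

namespace IsNormalClosed

theorem image_cls_subset_of_commutesMod (hS : G.IsNormalClosed S) {a b : H}
    (h : G.CommutesMod S a b) :
    G.cls S '' G.smul (G.smul {a} S) {b} ⊆ G.cls S '' G.smul (G.smul {b} S) {a} := by
  rintro _ ⟨c, hc, rfl⟩
  obtain ⟨e, he, hec⟩ := hS.exists_cosetRel_of_mem_smul_smul hc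
  obtain ⟨d, hd, hed⟩ := h e he
  exact ⟨d, mem_smul_smul_singleton_of_mem_hmul hS.one_mem hd,
    (hS.cls_eq_of_cosetRel (hS.cosetRel_trans (hS.cosetRel_symm hec) hed)).symm⟩

theorem image_cls_eq_singleton (hS : G.IsNormalClosed S) {a b : H} (h : G.hmul a b ⊆ S) :
    G.cls S '' G.smul (G.smul {a} S) {b} = {S} := by
  have hsub : G.smul (G.smul {a} S) {b} ⊆ S := fun c hc => by
    obtain ⟨e, he, hec⟩ := hS.exists_cosetRel_of_mem_smul_smul hc
    exact hS.mem_of_cosetRel (h he) hec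
  obtain ⟨c, hc⟩ := G.hmul_nonempty a b
  refine Set.eq_singleton_iff_nonempty_unique_mem.2
    ⟨⟨G.cls S c, c, mem_smul_smul_singleton_of_mem_hmul hS.one_mem hc, rfl⟩, ?_⟩
  rintro _ ⟨d, hd, rfl⟩
  exact hS.cls_eq_self (hsub hd)

theorem mem_qCenterPre {h : H} (hS : G.IsNormalClosed S) (hh : G.IsCentralMod S h) :
    h ∈ G.qCenterPre S :=
  ⟨fun y => (hS.image_cls_subset_of_commutesMod (hh.commutesMod_left y)).antisymm
      (hS.image_cls_subset_of_commutesMod (hh.commutesMod_right y)),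
    hS.image_cls_eq_singleton hh.star_hmul_subset⟩

theorem qCenterPre_mono {T : Set H} (hT : G.one ∈ T) (hTS : T ⊆ S) (hS : G.IsNormalClosed S) :
    G.qCenterPre T ⊆ G.qCenterPre S :=
  fun _ hh => hS.mem_qCenterPre (isCentralMod_of_mem_qCenterPre hT hTS hS hh)

theorem qCenterPre (hS : G.IsNormalClosed S) : G.IsNormalClosed (G.qCenterPre S) := by
  have central {h : H} : h ∈ G.qCenterPre S → G.IsCentralMod S h :=
    isCentralMod_of_mem_qCenterPre hS.one_mem subset_rfl hS
  refine ⟨hS.mem_qCenterPre (.of_mem hS hS.one_mem),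
    fun ha => hS.mem_qCenterPre ((central ha).star hS),
    fun ha hb _ hx => hS.mem_qCenterPre ((central ha).of_mem_hmul (central hb) hS hx), ?_⟩
  intro s k x hs hx
  obtain ⟨d, hd, hxd⟩ := (central hs).commutesMod_left k x hx
  obtain ⟨t, ht, hdt⟩ := hS.cosetRel_symm hxd
  obtain ⟨v, hv, hxv⟩ := G.exists_hmul_assoc_right hd hdt
  exact ⟨v, hS.mem_qCenterPre ((central hs).of_mem_hmul (.of_mem hS ht) hS hv), hxv⟩

end IsNormalClosed

variable (G)

theorem isNormalClosed_singleton_one : G.IsNormalClosed {G.one} where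
  one_mem := rfl
  star_mem := by
    rintro _ rfl
    exact G.star_one
  hmul_subset := by
    rintro _ _ rfl rfl
    rw [G.hmul_one]
  normal := by
    rintro _ k x rfl hx
    rw [G.one_hmul, Set.mem_singleton_iff] at hx
    subst hx
    exact ⟨G.one, rfl, G.mem_hmul_one _⟩

theorem isNormalClosed_upperCentral (i : ℕ) : G.IsNormalClosed (G.upperCentral i) := by
  induction i with
  | zero => exact G.isNormalClosed_singleton_one
  | succ i ih => exact ih.qCenterPre

end Hypergroup

theorem central_series_le_upperCentral_general {H : Type*} (G : Hypergroup H)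
    (n : ℕ) (T : ℕ → Set H)
    (h0 : T 0 = {G.one}) (hn : T n = Set.univ)
    (hclosed : ∀ i ≤ n, G.IsClosed (T i))
    (hcentral : ∀ i < n, T (i + 1) ⊆ G.qCenterPre (T i)) :
    (∀ i ≤ n, T i ⊆ G.upperCentral i) ∧ G.WeaklyNilpotent := by
  have le_upperCentral : ∀ i ≤ n, T i ⊆ G.upperCentral i := by
    intro i
    induction i with
    | zero => exact fun _ => h0.subset
    | succ i ih =>
      intro hi
      exact (hcentral i hi).trans <| (G.isNormalClosed_upperCentral i).qCenterPre_mono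
        (hclosed i (by omega)).one_mem (ih (by omega))
  exact ⟨le_upperCentral, n, Set.univ_subset_iff.1 (hn ▸ le_upperCentral n le_rfl)⟩

/-- if `1 = T₀ ⊆ T₁ ⊆ ⋯ ⊆ Tₙ = H` is a central series (each `Tᵢ`
closed and `Tᵢ₊₁//Tᵢ ⊆ Z(H//Tᵢ)`), then `Tᵢ ⊆ Zᵢ(H)` for all `i ≤ n`;
in particular a hypergroup possessing a central series is weakly nilpotent. -/
theorem central_series_le_upperCentral {H : Type*} (G : Hypergroup H)
    (n : ℕ) (T : ℕ → Set H)
    (h0 : T 0 = {G.one}) (hn : T n = Set.univ)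
    (hclosed : ∀ i ≤ n, G.IsClosed (T i))
    (hmono : ∀ i < n, T i ⊆ T (i + 1))
    (hcentral : ∀ i < n, T (i + 1) ⊆ G.qCenterPre (T i)) :
    (∀ i ≤ n, T i ⊆ G.upperCentral i) ∧ G.WeaklyNilpotent :=
  central_series_le_upperCentral_general G n T h0 hn hclosed hcentral
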